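/- arXiv:1006.1746 — 6 statements merged into one kernel-verified Lean document; each statement's English description precedes it below -/
import Mathlib

section
/- Every square matrix A with nonnegative entries indexed by a finite set I admits an invariant probability: a probability vector λ ∈ Δ(I) such that for every i ∈ I, Σ_{j ∈ I} λ(j) a_{ji} = λ(i) Σ_{j ∈ I} a_{ij}. -/
/-!
A stochastic matrix `P` fixes the constant vector, so `P - 1` is singular and some `v ≠ 0`
satisfies `v ᵥ* P = v`. Since `P ≥ 0`, the vector `|v|` is entrywise dominated by `|v| ᵥ* P`,
and both have the same total mass, so `|v|` is itself invariant; normalising it gives a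
stationary distribution. The required `λ` is a stationary distribution of the continuous-time
chain with jump rates `a`, hence of its uniformisation `1 + c⁻¹ (A - diag (A 1))`, a stochastic
matrix as soon as `c` bounds all row sums of `A`.
-/

open Finset Matrix

namespace Matrix

section Stochastic

variable {R n : Type*} [Fintype n]

theorem abs_vecMul_le [CommRing R] [LinearOrder R] [IsStrictOrderedRing R] {P : Matrix n n R}
    (hP : ∀ i j, 0 ≤ P i j) (v : n → R) : |v ᵥ* P| ≤ |v| ᵥ* P := fun j => by
  calc |(v ᵥ* P) j| = |∑ i, v i * P i j| := rfl
    _ ≤ ∑ i, |v i * P i j| := abs_sum_le_sum_abs _ _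
    _ = (|v| ᵥ* P) j := by simp only [abs_mul, abs_of_nonneg (hP _ j)]; rfl

variable [DecidableEq n]

theorem sum_vecMul_of_mem_rowStochastic [Semiring R] [PartialOrder R] [IsOrderedRing R]
    {P : Matrix n n R} (hP : P ∈ rowStochastic R n) (x : n → R) :
    ∑ i, (x ᵥ* P) i = ∑ i, x i := by
  simpa only [dotProduct_one] using
    (dotProduct_mulVec x P 1).symm.trans (congrArg (x ⬝ᵥ ·) (one_vecMul_of_mem_rowStochastic hP))

variable [Field R] [LinearOrder R] [IsStrictOrderedRing R] {P : Matrix n n R}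

theorem exists_ne_zero_vecMul_eq_self_of_mem_rowStochastic [Nonempty n]
    (hP : P ∈ rowStochastic R n) : ∃ v ≠ 0, v ᵥ* P = v := by
  have hdet : (P - 1).det = 0 := exists_mulVec_eq_zero_iff.1
    ⟨1, one_ne_zero, by rw [sub_mulVec, one_vecMul_of_mem_rowStochastic hP, one_mulVec, sub_self]⟩
  obtain ⟨v, hv, hvP⟩ := exists_vecMul_eq_zero_iff.2 hdet
  exact ⟨v, hv, by rwa [vecMul_sub, vecMul_one, sub_eq_zero] at hvP⟩

theorem abs_vecMul_eq_self_of_vecMul_eq_self (hP : P ∈ rowStochastic R n) {v : n → R}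
    (hv : v ᵥ* P = v) : |v| ᵥ* P = |v| := by
  have hle : ∀ i ∈ univ, |v| i ≤ (|v| ᵥ* P) i := fun i _ => by
    simpa only [hv] using abs_vecMul_le hP.1 v i
  funext i
  exact ((sum_eq_sum_iff_of_le hle).1 (sum_vecMul_of_mem_rowStochastic hP |v|).symm i
    (mem_univ i)).symm

theorem exists_stationary_of_mem_rowStochastic [Nonempty n] (hP : P ∈ rowStochastic R n) :
    ∃ μ : n → R, (∀ i, 0 ≤ μ i) ∧ ∑ i, μ i = 1 ∧ μ ᵥ* P = μ := by
  obtain ⟨v, hv, hvP⟩ := exists_ne_zero_vecMul_eq_self_of_mem_rowStochastic hP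
  have hmass : 0 < ∑ i, |v i| := by
    obtain ⟨i, hi⟩ := Function.ne_iff.1 hv
    exact sum_pos' (fun j _ => abs_nonneg _) ⟨i, mem_univ i, abs_pos.2 hi⟩
  refine ⟨(∑ i, |v i|)⁻¹ • |v|, fun i => ?_, ?_, ?_⟩
  · exact smul_nonneg (inv_nonneg.2 hmass.le) (abs_nonneg (v i))
  · simp only [Pi.smul_apply, Pi.abs_apply, smul_eq_mul, ← mul_sum, inv_mul_cancel₀ hmass.ne']
  · rw [smul_vecMul, abs_vecMul_eq_self_of_vecMul_eq_self hP hvP]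

end Stochastic

section Uniformization

variable {R n : Type*} [Fintype n] [DecidableEq n] [Field R] [LinearOrder R]
  [IsStrictOrderedRing R]

def uniformization (A : Matrix n n R) (c : R) : Matrix n n R :=
  1 + c⁻¹ • (A - diagonal (A *ᵥ 1))

theorem uniformization_mem_rowStochastic {A : Matrix n n R} (hA : ∀ i j, 0 ≤ A i j) {c : R}
    (hc : 0 < c) (hAc : ∀ i, (A *ᵥ 1) i ≤ c) : uniformization A c ∈ rowStochastic R n := by
  refine ⟨fun i j => ?_, ?_⟩
  · have hc' : 0 ≤ c⁻¹ := inv_nonneg.2 hc.le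
    rcases eq_or_ne i j with rfl | hij
    · have : c⁻¹ * (A *ᵥ 1) i ≤ 1 := inv_mul_le_one_of_le₀ (hAc i) hc.le
      simp only [uniformization, add_apply, one_apply_eq, smul_apply, sub_apply, diagonal_apply_eq,
        smul_eq_mul, mul_sub]
      linarith [mul_nonneg hc' (hA i i)]
    · simpa [uniformization, hij] using mul_nonneg hc' (hA i j)
  · have : diagonal (A *ᵥ 1) *ᵥ 1 = A *ᵥ 1 := funext fun i => by simp [mulVec_diagonal]
    rw [uniformization, add_mulVec, one_mulVec, smul_mulVec, sub_mulVec, this, sub_self, smul_zero,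
      add_zero]

theorem vecMul_uniformization_eq_self_iff (A : Matrix n n R) {c : R} (hc : c ≠ 0)
    (μ : n → R) : μ ᵥ* uniformization A c = μ ↔ μ ᵥ* A = μ * A *ᵥ 1 := by
  have hdiag : μ ᵥ* diagonal (A *ᵥ 1) = μ * A *ᵥ 1 := funext (vecMul_diagonal _ _)
  rw [uniformization, vecMul_add, vecMul_one, add_eq_left, vecMul_smul,
    smul_eq_zero_iff_right (inv_ne_zero hc), vecMul_sub, sub_eq_zero, hdiag]

end Uniformization

end Matrix

/-- Every nonnegative square matrix over a finite (nonempty) index set admits an invariant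
probability `λ`: `λ ≥ 0`, `∑ λ = 1`, and `∑_j λ j * a j i = λ i * ∑_j a i j` for every `i`. -/
theorem exists_invariant_probability {I : Type*} [Fintype I] [Nonempty I]
    (a : I → I → ℝ) (ha : ∀ i j, 0 ≤ a i j) :
    ∃ lam : I → ℝ, (∀ i, 0 ≤ lam i) ∧ (∑ i, lam i = 1) ∧
      ∀ i, ∑ j, lam j * a j i = lam i * ∑ j, a i j := by
  classical
  set A := Matrix.of a
  have hrow : ∀ i, (A *ᵥ 1) i = ∑ j, a i j := fun i => by simp [A, mulVec, dotProduct]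
  obtain ⟨c, hc, hAc⟩ : ∃ c : ℝ, 0 < c ∧ ∀ i, (A *ᵥ 1) i ≤ c := by
    obtain ⟨c, hc⟩ := Finite.exists_le (A *ᵥ 1)
    exact ⟨max c 1, by positivity, fun i => (hc i).trans (le_max_left c 1)⟩
  obtain ⟨μ, hμ0, hμ1, hμ⟩ := exists_stationary_of_mem_rowStochastic
    (uniformization_mem_rowStochastic ha hc hAc)
  refine ⟨μ, hμ0, hμ1, fun i => ?_⟩
  have := congrFun ((vecMul_uniformization_eq_self_iff A hc.ne' μ).1 hμ) i
  simpa [A, vecMul, dotProduct, hrow] using this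
end

section
/- Let λ be an invariant probability of the nonnegative matrix A⁺ (the componentwise positive part of a matrix A ∈ R^{I×I}), and let A⁻ = A − A⁺ be the componentwise negative part. Then for every U ∈ R^I, ⟨E_λ[R(·,U)] − A⁻, A − A⁻⟩ = 0, where E_λ[R(·,U)] is the matrix whose (i,j)-entry is λ(i)(U_j − U_i). -/
/-!
Since `A - A⁻ = A⁺` and `A⁻`, `A⁺` have disjoint supports, the inner product reduces to
`∑ i j, λ i (U j - U i) A⁺ i j`. Invariance of `λ` says that the mass `∑ i, λ i A⁺ i j` flowing into `j`
equals the mass `λ j ∑ k, A⁺ j k` flowing out of it, so the two halves of this sum cancel.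
-/

open Finset

theorem sub_min_zero_eq_max_zero {α : Type*} [AddCommGroup α] [LinearOrder α]
    [IsOrderedAddMonoid α] (a : α) : a - min a 0 = max a 0 := by
  rw [sub_eq_iff_eq_add, add_comm, min_add_max, add_zero]

theorem min_zero_mul_max_zero {α : Type*} [MulZeroClass α] [LinearOrder α] (a : α) :
    min a 0 * max a 0 = 0 := by
  rcases le_total a 0 with h | h
  · rw [max_eq_right h, mul_zero]
  · rw [min_eq_right h, zero_mul]

theorem sub_min_zero_mul_sub_min_zero {α : Type*} [CommRing α] [LinearOrder α]
    [IsOrderedAddMonoid α] (c a : α) :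
    (c - min a 0) * (a - min a 0) = c * max a 0 := by
  rw [sub_min_zero_eq_max_zero, sub_mul, min_zero_mul_max_zero, sub_zero]

theorem sum_sum_mul_sub_mul_eq_zero_of_invariant {I R : Type*} [Fintype I] [CommRing R]
    (P : I → I → R) (lam : I → R)
    (hinv : ∀ i, ∑ j, lam j * P j i = lam i * ∑ j, P i j) (U : I → R) :
    ∑ i, ∑ j, lam i * (U j - U i) * P i j = 0 := by
  have inflow : ∑ i, ∑ j, U j * (lam i * P i j) = ∑ i, U i * (lam i * ∑ j, P i j) := by
    rw [sum_comm]
    exact sum_congr rfl fun j _ => by rw [← mul_sum, hinv j]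
  have outflow : ∑ i, ∑ j, U i * (lam i * P i j) = ∑ i, U i * (lam i * ∑ j, P i j) :=
    sum_congr rfl fun i _ => by rw [mul_sum, mul_sum]
  calc ∑ i, ∑ j, lam i * (U j - U i) * P i j
      = ∑ i, ∑ j, U j * (lam i * P i j) - ∑ i, ∑ j, U i * (lam i * P i j) := by
        simp only [← sum_sub_distrib]
        exact sum_congr rfl fun i _ => sum_congr rfl fun j _ => by ring
    _ = 0 := by rw [inflow, outflow, sub_self]

theorem invariant_prob_bset_identity_general {I : Type*} [Fintype I]
    (A : I → I → ℝ)
    (lam : I → ℝ)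
    (hinv : ∀ i, ∑ j, lam j * max (A j i) 0 = lam i * ∑ j, max (A i j) 0)
    (U : I → ℝ) :
    ∑ i, ∑ j, (lam i * (U j - U i) - min (A i j) 0) * (A i j - min (A i j) 0) = 0 := by
  simp only [sub_min_zero_mul_sub_min_zero]
  exact sum_sum_mul_sub_mul_eq_zero_of_invariant (fun i j => max (A i j) 0) lam hinv U

/-- If `λ` is an invariant probability of `A⁺` (componentwise positive part of `A`), then for every
`U`, `⟪E_λ[R(·,U)] - A⁻, A - A⁻⟫ = 0`, where `E_λ[R(·,U)]` has `(i,j)` entry `λ i * (U j - U i)`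
and `A⁻` is the componentwise negative part of `A`. -/
theorem invariant_prob_bset_identity {I : Type*} [Fintype I]
    (A : I → I → ℝ)
    (lam : I → ℝ) (hlam0 : ∀ i, 0 ≤ lam i) (hlam1 : ∑ i, lam i = 1)
    (hinv : ∀ i, ∑ j, lam j * max (A j i) 0 = lam i * ∑ j, max (A i j) 0)
    (U : I → ℝ) :
    ∑ i, ∑ j, (lam i * (U j - U i) - min (A i j) 0) * (A i j - min (A i j) 0) = 0 :=
  invariant_prob_bset_identity_general A lam hinv U
end

section
/- Let ρ : Δ(I) × Δ(J) → R^d be a bilinear (affine in each variable) payoff map over finite sets I, J, and let C ⊆ R^d be a closed convex set. Suppose that for every y ∈ Δ(J) there exists x ∈ Δ(I) with ρ(x,y) ∈ C. Then C is a B-set for Player 1: for every z ∈ R^d there exist p ∈ Π_C(z) and x ∈ Δ(I) such that ⟨ρ(x,y) − p, z − p⟩ ≤ 0 for all y ∈ Δ(J). -/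
/-!
Let `p` be the nearest point of `C` to `z`, so that `⟪z - p, c - p⟫ ≤ 0` for every `c ∈ C`.
Up to the constant `⟪z - p, p⟫`, the function `g(x, y) = ⟪ρ(x, y) - p, z - p⟫` is bilinear, and
the hypothesis gives for every `y` some `x` with `ρ(x, y) ∈ C`, hence `g(x, y) ≤ 0`. Von Neumann's
minimax theorem (Sion's theorem on the compact convex simplices) exchanges the quantifiers.
-/

open scoped InnerProductSpace

theorem LinearMap.exists_forall_le_of_forall_exists_le
    {E F : Type*} [AddCommGroup E] [Module ℝ E] [TopologicalSpace E] [IsTopologicalAddGroup E]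
    [ContinuousSMul ℝ E] [T2Space E] [FiniteDimensional ℝ E]
    [AddCommGroup F] [Module ℝ F] [TopologicalSpace F] [IsTopologicalAddGroup F]
    [ContinuousSMul ℝ F] [T2Space F] [FiniteDimensional ℝ F]
    (B : E →ₗ[ℝ] F →ₗ[ℝ] ℝ) {X : Set E} {Y : Set F}
    (hXne : X.Nonempty) (hXconv : Convex ℝ X) (hXcpt : IsCompact X)
    (hYne : Y.Nonempty) (hYconv : Convex ℝ Y) (hYcpt : IsCompact Y) {t : ℝ}
    (h : ∀ y ∈ Y, ∃ x ∈ X, B x y ≤ t) :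
    ∃ x ∈ X, ∀ y ∈ Y, B x y ≤ t := by
  obtain ⟨a, ha, b, hb, hab⟩ := Sion.exists_isSaddlePointOn (f := fun x y ↦ B x y)
    hXne hXconv hXcpt
    (fun y _ ↦ (B.flip y).continuous_of_finiteDimensional.lowerSemicontinuous.lowerSemicontinuousOn _)
    (fun y _ ↦ ((B.flip y).convexOn hXconv).quasiconvexOn)
    hYconv hYne hYcpt
    (fun x _ ↦ (B x).continuous_of_finiteDimensional.upperSemicontinuous.upperSemicontinuousOn _)
    (fun x _ ↦ ((B x).concaveOn hYconv).quasiconcaveOn)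
  obtain ⟨x, hx, hxb⟩ := h b hb
  exact ⟨a, ha, fun y hy ↦ (hab x hx y hy).trans hxb⟩

theorem exists_nearest_of_complete_convex {F : Type*} [NormedAddCommGroup F]
    [InnerProductSpace ℝ F] {K : Set F} (hne : K.Nonempty) (hcomplete : IsComplete K)
    (hconv : Convex ℝ K) (z : F) :
    ∃ p ∈ K, (∀ c ∈ K, ‖z - p‖ ≤ ‖z - c‖) ∧ ∀ c ∈ K, ⟪z - p, c - p⟫_ℝ ≤ 0 := by
  obtain ⟨p, hp, hmin⟩ := exists_norm_eq_iInf_of_complete_convex hne hcomplete hconv z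
  refine ⟨p, hp, fun c hc ↦ ?_, (norm_eq_iInf_iff_real_inner_le_zero hconv hp).mp hmin⟩
  rw [hmin]
  exact ciInf_le ⟨0, Set.forall_mem_range.2 fun _ ↦ norm_nonneg _⟩ (⟨c, hc⟩ : K)

section MixedExtension

variable {I J E : Type*} [Fintype I] [Fintype J] [AddCommGroup E] [Module ℝ E]

def mixedPayoff (ρ : I → J → E) : (I → ℝ) →ₗ[ℝ] (J → ℝ) →ₗ[ℝ] E :=
  LinearMap.mk₂ ℝ (fun x y ↦ ∑ i, ∑ j, (x i * y j) • ρ i j)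
    (fun x x' y ↦ by simp only [Pi.add_apply, add_mul, add_smul, Finset.sum_add_distrib])
    (fun c x y ↦ by simp only [Pi.smul_apply, smul_eq_mul, mul_assoc, mul_smul, Finset.smul_sum])
    (fun x y y' ↦ by simp only [Pi.add_apply, mul_add, add_smul, Finset.sum_add_distrib])
    (fun c x y ↦ by
      simp only [Pi.smul_apply, smul_eq_mul, mul_left_comm _ c, mul_smul, Finset.smul_sum])

@[simp]
theorem mixedPayoff_apply (ρ : I → J → E) (x : I → ℝ) (y : J → ℝ) :
    mixedPayoff ρ x y = ∑ i, ∑ j, (x i * y j) • ρ i j := rfl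

end MixedExtension

/-- If for every mixed action `y ∈ Δ(J)` there is `x ∈ Δ(I)` with expected payoff `ρ(x,y) ∈ C`
(`C` closed convex), then `C` is a B-set: for every `z` there are a nearest point `p` of `C` to
`z` and `x ∈ Δ(I)` such that `⟪ρ(x,y) - p, z - p⟫ ≤ 0` for all `y ∈ Δ(J)`. -/
theorem convex_condition_implies_Bset {I J : Type*} [Fintype I] [Fintype J] [Nonempty J]
    {d : ℕ} (ρ : I → J → EuclideanSpace ℝ (Fin d))
    (C : Set (EuclideanSpace ℝ (Fin d))) (hCclosed : IsClosed C) (hCconv : Convex ℝ C)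
    (hcond : ∀ y : J → ℝ, y ∈ stdSimplex ℝ J → ∃ x ∈ stdSimplex ℝ I,
      (∑ i, ∑ j, (x i * y j) • ρ i j) ∈ C) :
    ∀ z : EuclideanSpace ℝ (Fin d), ∃ p ∈ C,
      (∀ c ∈ C, ‖z - p‖ ≤ ‖z - c‖) ∧
      ∃ x ∈ stdSimplex ℝ I, ∀ y ∈ stdSimplex ℝ J,
        inner ℝ ((∑ i, ∑ j, (x i * y j) • ρ i j) - p) (z - p) ≤ (0 : ℝ) := by
  classical
  intro z
  obtain ⟨j₀⟩ := ‹Nonempty J›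
  obtain ⟨x₀, hx₀, hx₀C⟩ := hcond _ (single_mem_stdSimplex ℝ j₀)
  obtain ⟨p, hpC, hnear, hproj⟩ :=
    exists_nearest_of_complete_convex ⟨_, hx₀C⟩ hCclosed.isComplete hCconv z
  set g := (mixedPayoff ρ).compr₂ (innerₛₗ ℝ (z - p))
  have inner_nonpos_iff : ∀ x y,
      inner ℝ ((∑ i, ∑ j, (x i * y j) • ρ i j) - p) (z - p) ≤ (0 : ℝ) ↔ g x y ≤ ⟪z - p, p⟫_ℝ := by
    intro x y
    rw [real_inner_comm, inner_sub_right, sub_nonpos, LinearMap.compr₂_apply, mixedPayoff_apply,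
      innerₛₗ_apply_apply]
  obtain ⟨x, hx, hxy⟩ := g.exists_forall_le_of_forall_exists_le
    ⟨x₀, hx₀⟩ (convex_stdSimplex ℝ I) (isCompact_stdSimplex ℝ I)
    ⟨_, single_mem_stdSimplex ℝ j₀⟩ (convex_stdSimplex ℝ J) (isCompact_stdSimplex ℝ J)
    fun y hy ↦ by
      obtain ⟨x, hx, hxC⟩ := hcond y hy
      exact ⟨x, hx, (inner_nonpos_iff x y).1 (by rw [real_inner_comm]; exact hproj _ hxC)⟩
  exact ⟨p, hpC, hnear, x, hx, fun y hy ↦ (inner_nonpos_iff x y).2 (hxy y hy)⟩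
end

section
/- Let g : Δ(I) × Δ(J) → R be bilinear (affine in each coordinate) on the product of two finite-dimensional probability simplices, and suppose for every y ∈ Δ(J) there exists x ∈ Δ(I) with g(x,y) ≤ 0. Then there exists x* ∈ Δ(I) such that g(x*, y) ≤ 0 for all y ∈ Δ(J). -/
/-!
Write `g x y = x ⬝ᵥ A *ᵥ y` with `A i j = g(eᵢ, eⱼ)`. If no `x` is uniformly good, the compact
convex set `{x ᵥ* A | x ∈ Δ(I)}` misses the closed convex cone of nonpositive vectors. A
separating functional is nonnegative on that cone, so after normalisation it is a mixed strategy
`y ∈ Δ(J)` with `g x y > 0` for every `x ∈ Δ(I)`, contradicting the hypothesis at `y`.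
-/

open Matrix

theorem LinearMap.nonneg_of_forall_lt_apply_smul {E : Type*} [AddCommGroup E] [Module ℝ E]
    (f : E →ₗ[ℝ] ℝ) {z : E} {v : ℝ} (h : ∀ t : ℝ, 0 ≤ t → v < f (t • z)) : 0 ≤ f z := by
  by_contra! hz
  have ht : 0 ≤ |v| / -f z := div_nonneg (abs_nonneg v) (neg_nonneg.2 hz.le)
  have hval : f ((|v| / -f z) • z) = -|v| := by
    rw [map_smul, smul_eq_mul, div_mul_eq_mul_div, div_neg, mul_div_cancel_right₀ _ hz.ne]
  linarith [h _ ht, neg_abs_le v]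

theorem exists_pos_smul_mem_stdSimplex {J : Type*} [Fintype J] {w : J → ℝ} (hw : 0 ≤ w)
    (hw₀ : w ≠ 0) : ∃ r : ℝ, 0 < r ∧ r • w ∈ stdSimplex ℝ J := by
  obtain ⟨j, hj⟩ := Function.ne_iff.1 hw₀
  have hsum : 0 < ∑ i, w i :=
    Finset.sum_pos' (fun i _ => hw i) ⟨j, Finset.mem_univ j, lt_of_le_of_ne (hw j) (Ne.symm hj)⟩
  refine ⟨(∑ i, w i)⁻¹, inv_pos.2 hsum, fun i => mul_nonneg (inv_nonneg.2 hsum.le) (hw i), ?_⟩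
  simp only [Pi.smul_apply, smul_eq_mul, ← Finset.mul_sum, inv_mul_cancel₀ hsum.ne']

/-- Gordan's alternative, in its compact convex form. -/
theorem exists_mem_stdSimplex_forall_dotProduct_pos {J : Type*} [Fintype J]
    {C : Set (J → ℝ)} (hconv : Convex ℝ C) (hcomp : IsCompact C) (hne : C.Nonempty)
    (hC : ∀ c ∈ C, ¬ c ≤ 0) : ∃ y ∈ stdSimplex ℝ J, ∀ c ∈ C, 0 < c ⬝ᵥ y := by
  classical
  obtain ⟨f, u, v, hfC, huv, hvf⟩ := geometric_hahn_banach_compact_closed hconv hcomp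
    (convex_Iic 0) isClosed_Iic (Set.disjoint_left.2 hC)
  set w : J → ℝ := fun j => f (-Pi.single j 1)
  have hf : ∀ z, f z = -(z ⬝ᵥ w) := by
    intro z
    have hcoord := LinearMap.pi_apply_eq_sum_univ f.toLinearMap z
    simp only [ContinuousLinearMap.coe_coe] at hcoord
    rw [hcoord]
    simp [w, dotProduct, ← Pi.single_apply, Pi.single_comm]
  have hw : 0 ≤ w := fun j => f.toLinearMap.nonneg_of_forall_lt_apply_smul fun t ht =>
    hvf _ <| Set.mem_Iic.2 <| smul_nonpos_of_nonneg_of_nonpos ht <| neg_nonpos.2 <|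
      Pi.single_nonneg.2 zero_le_one
  -- `0` lies in the orthant, so `f < u < v < f 0 = 0` on `C`.
  have hv : v < 0 := by simpa using hvf 0 (Set.mem_Iic.2 le_rfl)
  have hpos : ∀ c ∈ C, 0 < c ⬝ᵥ w := fun c hc => by linarith [hfC c hc, hf c]
  obtain ⟨c, hc⟩ := hne
  obtain ⟨r, hr, hrw⟩ := exists_pos_smul_mem_stdSimplex hw fun h => by
    simpa [h] using hpos c hc
  exact ⟨r • w, hrw, fun c hc => by rw [dotProduct_smul]; exact mul_pos hr (hpos c hc)⟩

theorem Matrix.exists_mem_stdSimplex_forall_dotProduct_mulVec_nonpos {I J : Type*} [Fintype I]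
    [Fintype J] [Nonempty I] (A : Matrix I J ℝ)
    (h : ∀ y ∈ stdSimplex ℝ J, ∃ x ∈ stdSimplex ℝ I, x ⬝ᵥ A *ᵥ y ≤ 0) :
    ∃ x ∈ stdSimplex ℝ I, ∀ y ∈ stdSimplex ℝ J, x ⬝ᵥ A *ᵥ y ≤ 0 := by
  classical
  by_contra! hbad
  have hC : ∀ c ∈ A.vecMulLinear '' stdSimplex ℝ I, ¬ c ≤ 0 := by
    rintro _ ⟨x, hx, rfl⟩ hle
    obtain ⟨y, hy, hpos⟩ := hbad x hx
    have hnonpos := dotProduct_nonneg_of_nonneg (neg_nonneg.2 hle) hy.1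
    rw [neg_dotProduct, vecMulLinear_apply, ← dotProduct_mulVec] at hnonpos
    linarith
  obtain ⟨y, hy, hpos⟩ := exists_mem_stdSimplex_forall_dotProduct_pos
    ((convex_stdSimplex ℝ I).linear_image A.vecMulLinear)
    ((isCompact_stdSimplex ℝ I).image A.vecMulLinear.continuous_of_finiteDimensional)
    (.image _ ⟨_, single_mem_stdSimplex ℝ (Classical.arbitrary I)⟩) hC
  obtain ⟨x, hx, hle⟩ := h y hy
  have hgain := hpos _ ⟨x, hx, rfl⟩
  rw [vecMulLinear_apply, ← dotProduct_mulVec] at hgain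
  linarith

theorem exists_uniform_good_strategy_general {I J : Type*} [Fintype I] [Fintype J]
    [Nonempty I] [DecidableEq I] [DecidableEq J]
    (g : (I → ℝ) → (J → ℝ) → ℝ)
    (hbil : ∀ x y, g x y = ∑ i, ∑ j, x i * y j * g (Pi.single i 1) (Pi.single j 1))
    (hcond : ∀ y ∈ stdSimplex ℝ J, ∃ x ∈ stdSimplex ℝ I, g x y ≤ 0) :
    ∃ x ∈ stdSimplex ℝ I, ∀ y ∈ stdSimplex ℝ J, g x y ≤ 0 := by
  set A : Matrix I J ℝ := Matrix.of fun i j => g (Pi.single i 1) (Pi.single j 1)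
  have hg : ∀ x y, g x y = x ⬝ᵥ A *ᵥ y := fun x y => by
    simp only [hbil x y, A, dotProduct, mulVec, of_apply, Finset.mul_sum]
    exact Finset.sum_congr rfl fun i _ => Finset.sum_congr rfl fun j _ => by ring
  simp only [hg] at hcond ⊢
  exact A.exists_mem_stdSimplex_forall_dotProduct_mulVec_nonpos hcond

/-- Minimax consequence: if `g` is bilinear on `Δ(I) × Δ(J)` and for every `y ∈ Δ(J)` there is
`x ∈ Δ(I)` with `g(x,y) ≤ 0`, then some `x* ∈ Δ(I)` satisfies `g(x*,y) ≤ 0` for all `y ∈ Δ(J)`. -/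
theorem exists_uniform_good_strategy {I J : Type*} [Fintype I] [Fintype J]
    [Nonempty I] [Nonempty J] [DecidableEq I] [DecidableEq J]
    (g : (I → ℝ) → (J → ℝ) → ℝ)
    (hbil : ∀ x y, g x y = ∑ i, ∑ j, x i * y j * g (Pi.single i 1) (Pi.single j 1))
    (hcond : ∀ y ∈ stdSimplex ℝ J, ∃ x ∈ stdSimplex ℝ I, g x y ≤ 0) :
    ∃ x ∈ stdSimplex ℝ I, ∀ y ∈ stdSimplex ℝ J, g x y ≤ 0 :=
  exists_uniform_good_strategy_general g hbil hcond
end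

section
/- Let (X_n) be a sequence of random vectors in R^d adapted to a filtration, with ‖X_n‖ ≤ B almost surely and E[X_{n+1} | F_n] = m_{n+1} (a predictable sequence). Then for every η > 0 and n, P( ‖(1/n) Σ_{m=1}^n (X_m − m_m)‖ ≥ η ) ≤ 2 exp(−n η² / (2 B²) · c_d) for a dimension-dependent constant c_d > 0. -/
/-!
Each coordinate of `∑ₖ (Xₖ₊₁ - Mₖ₊₁)` in an orthonormal basis is a real martingale with increments
bounded by `2B`. By convexity of `exp` on `[-K, K]`, a conditionally centred increment with
`|D| ≤ K` has `E[exp (t D) | ℱ] ≤ cosh (t K) ≤ exp (t² K² / 2)`; peeling off one increment at a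
time bounds the moment generating function of the sum, and Chernoff's bound gives Azuma's
inequality for each coordinate. A vector of norm at least `r` in dimension `d` has a coordinate of
size at least `r / √d`, so a union bound over the `2d` one-sided coordinate events gives
`2d exp (-n η² / (8 d B²))`. Since a probability is also at most `1`, the factor `d` can be traded
for the smaller constant `c_d = 1 / (8 d²)` in the exponent.
-/

open MeasureTheory ProbabilityTheory Filter Real Finset Module
open scoped RealInnerProductSpace

lemma exp_mul_le_cosh_add_sinh_div_mul {K t x : ℝ} (hK : 0 < K) (hx : |x| ≤ K) :
    exp (t * x) ≤ cosh (t * K) + sinh (t * K) / K * x := by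
  obtain ⟨hx₁, hx₂⟩ := abs_le.1 hx
  have hl : 0 ≤ (K - x) / (2 * K) := div_nonneg (by linarith) (by positivity)
  have hr : 0 ≤ (K + x) / (2 * K) := div_nonneg (by linarith) (by positivity)
  have hconv := convexOn_exp.2 (Set.mem_univ (-(t * K))) (Set.mem_univ (t * K)) hl hr
    (by field_simp; ring)
  have hcomb : ((K - x) / (2 * K)) • -(t * K) + ((K + x) / (2 * K)) • (t * K) = t * x := by
    simp only [smul_eq_mul]; field_simp; ring
  rw [hcomb] at hconv
  refine hconv.trans_eq ?_
  simp only [smul_eq_mul, cosh_eq, sinh_eq, exp_neg]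
  field_simp
  ring

lemma mul_le_norm_of_le_norm_inv_smul {E : Type*} [SeminormedAddCommGroup E] [NormedSpace ℝ E]
    {n : ℕ} {η : ℝ} {v : E} (hη : 0 < η) (h : η ≤ ‖(n : ℝ)⁻¹ • v‖) : n * η ≤ ‖v‖ := by
  obtain rfl | hn := n.eq_zero_or_pos
  · simp only [CharP.cast_eq_zero, inv_zero, zero_smul, norm_zero] at h
    linarith
  rw [norm_smul, norm_inv, RCLike.norm_natCast] at h
  exact (le_inv_mul_iff₀ (by positivity)).1 h

lemma sum_Icc_one_eq_sum_range {M : Type*} [AddCommMonoid M] (f : ℕ → M) (n : ℕ) :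
    ∑ m ∈ Icc 1 n, f m = ∑ k ∈ range n, f (k + 1) := by
  rw [range_eq_Ico, sum_Ico_add']
  rfl

lemma min_one_two_mul_exp_neg_le {p : ℕ} (hp : 0 < p) (x : ℝ) :
    min 1 (2 * p * exp (-x)) ≤ 2 * exp (-(x / (2 * p))) := by
  by_cases hx : x / (2 * p) ≤ log 2
  · calc min 1 (2 * p * exp (-x)) ≤ 1 := min_le_left _ _
      _ = 2 * exp (-log 2) := by rw [exp_neg, exp_log two_pos]; norm_num
      _ ≤ 2 * exp (-(x / (2 * p))) := by gcongr
  push Not at hx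
  have hp₁ : (1 : ℝ) ≤ p := by exact_mod_cast hp
  -- `p < 2 ^ p` gives `log p ≤ p log 2 < x / 2`, and `x / 2 ≤ x - x / (2 p)`.
  have hlog : log p ≤ p * log 2 := by
    rw [← log_pow]
    exact log_le_log (by positivity) (by exact_mod_cast Nat.lt_two_pow_self.le)
  have hx_eq : x = 2 * p * (x / (2 * p)) := by field_simp
  have hlog2 : 0 < log 2 := log_pos one_lt_two
  calc min 1 (2 * p * exp (-x)) ≤ 2 * p * exp (-x) := min_le_right _ _
    _ = 2 * exp (log p - x) := by rw [exp_sub, exp_log (by positivity), exp_neg]; ring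
    _ ≤ 2 * exp (-(x / (2 * p))) := by gcongr; nlinarith

section ConditionalExpectation

variable {Ω : Type*} {m m0 : MeasurableSpace Ω} {μ : Measure Ω} [IsFiniteMeasure μ]

lemma ae_norm_condExp_le {E : Type*} [NormedAddCommGroup E] [NormedSpace ℝ E] [CompleteSpace E]
    (hm : m ≤ m0) {f : Ω → E} (hf : Integrable f μ) {B : ℝ} (hfB : ∀ᵐ ω ∂μ, ‖f ω‖ ≤ B) :
    ∀ᵐ ω ∂μ, ‖μ[f | m] ω‖ ≤ B := by
  have hball := (convex_closedBall (0 : E) B).condExp_mem hm hf Metric.isClosed_closedBall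
    (by simpa only [mem_closedBall_zero_iff] using hfB)
  simpa only [mem_closedBall_zero_iff] using hball

lemma condExp_exp_mul_le_of_abs_le (hm : m ≤ m0) {D : Ω → ℝ} (hD : AEStronglyMeasurable D μ)
    {K : ℝ} (hK : 0 < K) (hDK : ∀ᵐ ω ∂μ, |D ω| ≤ K) (hD₀ : μ[D | m] =ᵐ[μ] 0) (t : ℝ) :
    μ[fun ω => exp (t * D ω) | m] ≤ᵐ[μ] fun _ => exp (t ^ 2 * K ^ 2 / 2) := by
  set a := cosh (t * K)
  set b := sinh (t * K) / K
  have hD_int : Integrable D μ := .of_bound hD K (by simpa only [Real.norm_eq_abs] using hDK)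
  have hexp_int : Integrable (fun ω => exp (t * D ω)) μ :=
    integrable_exp_mul_of_mem_Icc hD.aemeasurable
      (by filter_upwards [hDK] with ω h using abs_le.1 h)
  have hchord : μ[fun ω => exp (t * D ω) | m] ≤ᵐ[μ] μ[(fun _ => a) + b • D | m] :=
    condExp_mono hexp_int ((integrable_const a).add (hD_int.smul b))
      (by filter_upwards [hDK] with ω h using exp_mul_le_cosh_add_sinh_div_mul hK h)
  have hlin : μ[(fun _ => a) + b • D | m] =ᵐ[μ] fun _ => a := by
    filter_upwards [condExp_add (integrable_const a) (hD_int.smul b) m, condExp_smul b D m, hD₀]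
      with ω h_add h_smul h₀
    simp [h_add, h_smul, h₀, condExp_const hm a]
  filter_upwards [hchord, hlin] with ω h₁ h₂
  calc μ[fun ω => exp (t * D ω) | m] ω ≤ a := h₁.trans_eq h₂
    _ ≤ exp (t ^ 2 * K ^ 2 / 2) := by simpa only [mul_pow] using cosh_le_exp_half_sq (t * K)

end ConditionalExpectation

section MartingaleDifference

variable {Ω E : Type*} [NormedAddCommGroup E] [NormedSpace ℝ E]
  {m0 : MeasurableSpace Ω} {μ : Measure Ω} {ℱ : Filtration ℕ m0}

structure IsMartingaleDifference (Y : ℕ → Ω → E) (ℱ : Filtration ℕ m0) (μ : Measure Ω) :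
    Prop where
  stronglyMeasurable : ∀ k, StronglyMeasurable[ℱ (k + 1)] (Y k)
  integrable : ∀ k, Integrable (Y k) μ
  condExp_eq_zero : ∀ k, μ[Y k | ℱ k] =ᵐ[μ] 0

namespace IsMartingaleDifference

variable {Y : ℕ → Ω → E}

lemma map [CompleteSpace E] {F : Type*} [NormedAddCommGroup F] [NormedSpace ℝ F] [CompleteSpace F]
    (hY : IsMartingaleDifference Y ℱ μ) (L : E →L[ℝ] F) :
    IsMartingaleDifference (fun k ω => L (Y k ω)) ℱ μ where
  stronglyMeasurable k := L.continuous.comp_stronglyMeasurable (hY.stronglyMeasurable k)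
  integrable k := L.integrable_comp (hY.integrable k)
  condExp_eq_zero k := by
    filter_upwards [(L.comp_condExp_comm (m := ℱ k) (hY.integrable k)).symm,
      hY.condExp_eq_zero k] with ω h h₀
    rw [Function.comp_def] at h
    simp [h, h₀]

lemma neg [CompleteSpace E] (hY : IsMartingaleDifference Y ℱ μ) :
    IsMartingaleDifference (fun k ω => -Y k ω) ℱ μ := by
  simpa using hY.map (-ContinuousLinearMap.id ℝ E)

lemma stronglyMeasurable_sum (hY : IsMartingaleDifference Y ℱ μ) (n : ℕ) :
    StronglyMeasurable[ℱ n] fun ω => ∑ k ∈ range n, Y k ω :=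
  Finset.stronglyMeasurable_fun_sum _ fun k hk =>
    (hY.stronglyMeasurable k).mono (ℱ.mono (Finset.mem_range.1 hk))

end IsMartingaleDifference

lemma isMartingaleDifference_sub_condExp [CompleteSpace E] [IsFiniteMeasure μ] {X M : ℕ → Ω → E}
    (hX : StronglyAdapted ℱ X) (hX_int : ∀ n, Integrable (X n) μ)
    (hM : ∀ n, StronglyMeasurable[ℱ n] (M (n + 1)))
    (hXM : ∀ n, M (n + 1) =ᵐ[μ] μ[X (n + 1) | ℱ n]) :
    IsMartingaleDifference (fun k ω => X (k + 1) ω - M (k + 1) ω) ℱ μ := by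
  have hM_int k : Integrable (M (k + 1)) μ := integrable_condExp.congr (hXM k).symm
  refine ⟨fun k => (hX (k + 1)).sub ((hM k).mono (ℱ.mono k.le_succ)),
    fun k => (hX_int (k + 1)).sub (hM_int k), fun k => ?_⟩
  have hM_cond : μ[M (k + 1) | ℱ k] = M (k + 1) :=
    condExp_of_stronglyMeasurable (ℱ.le k) (hM k) (hM_int k)
  filter_upwards [condExp_sub (hX_int (k + 1)) (hM_int k) (ℱ k), hXM k] with ω h_sub h
  show μ[X (k + 1) - M (k + 1) | ℱ k] ω = 0
  simp [h_sub, hM_cond, h]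

end MartingaleDifference

section Azuma

variable {Ω : Type*} {m0 : MeasurableSpace Ω} {μ : Measure Ω} [IsProbabilityMeasure μ]
  {ℱ : Filtration ℕ m0} {Y : ℕ → Ω → ℝ} {K : ℝ}

lemma integrable_exp_mul_sum_of_abs_le (hY : ∀ k, AEStronglyMeasurable (Y k) μ)
    (hYK : ∀ k, ∀ᵐ ω ∂μ, |Y k ω| ≤ K) (t : ℝ) (n : ℕ) :
    Integrable (fun ω => exp (t * ∑ k ∈ range n, Y k ω)) μ := by
  refine integrable_exp_mul_of_mem_Icc (a := -(n * K)) (b := n * K)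
    (Finset.aemeasurable_fun_sum _ fun k _ => (hY k).aemeasurable) ?_
  filter_upwards [ae_all_iff.2 hYK] with ω hω
  refine abs_le.1 ((abs_sum_le_sum_abs _ _).trans ?_)
  simpa using Finset.sum_le_card_nsmul (range n) _ K fun k _ => hω k

lemma integral_exp_mul_sum_le_of_abs_le (hY : IsMartingaleDifference Y ℱ μ) (hK : 0 < K)
    (hYK : ∀ k, ∀ᵐ ω ∂μ, |Y k ω| ≤ K) (t : ℝ) (n : ℕ) :
    ∫ ω, exp (t * ∑ k ∈ range n, Y k ω) ∂μ ≤ exp (n * (t ^ 2 * K ^ 2 / 2)) := by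
  have hY_meas k : AEStronglyMeasurable (Y k) μ := (hY.integrable k).aestronglyMeasurable
  induction n with
  | zero => simp
  | succ n ih =>
    set f := fun ω => exp (t * ∑ k ∈ range n, Y k ω)
    set g := fun ω => exp (t * Y n ω)
    have hfg : (fun ω => exp (t * ∑ k ∈ range (n + 1), Y k ω)) = f * g := by
      ext ω
      simp [f, g, sum_range_succ, mul_add, exp_add]
    have hfg_int : Integrable (f * g) μ :=
      hfg ▸ integrable_exp_mul_sum_of_abs_le hY_meas hYK t (n + 1)
    have hg_int : Integrable g μ := integrable_exp_mul_of_mem_Icc (hY_meas n).aemeasurable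
      (by filter_upwards [hYK n] with ω h using abs_le.1 h)
    have hf_meas : StronglyMeasurable[ℱ n] f :=
      continuous_exp.comp_stronglyMeasurable ((hY.stronglyMeasurable_sum n).const_mul t)
    have hpull : μ[f * g | ℱ n] =ᵐ[μ] f * μ[g | ℱ n] :=
      condExp_mul_of_stronglyMeasurable_left hf_meas hfg_int hg_int
    have hg_cond : μ[g | ℱ n] ≤ᵐ[μ] fun _ => exp (t ^ 2 * K ^ 2 / 2) :=
      condExp_exp_mul_le_of_abs_le (ℱ.le n) (hY_meas n) hK (hYK n) (hY.condExp_eq_zero n) t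
    calc ∫ ω, exp (t * ∑ k ∈ range (n + 1), Y k ω) ∂μ
        = ∫ ω, (f * μ[g | ℱ n]) ω ∂μ := by
          rw [hfg, ← integral_condExp (ℱ.le n)]
          exact integral_congr_ae hpull
      _ ≤ ∫ ω, f ω * exp (t ^ 2 * K ^ 2 / 2) ∂μ := by
          refine integral_mono_ae (integrable_condExp.congr hpull)
            ((integrable_exp_mul_sum_of_abs_le hY_meas hYK t n).mul_const _) ?_
          filter_upwards [hg_cond] with ω h
          exact mul_le_mul_of_nonneg_left h (exp_nonneg _)
      _ ≤ exp (n * (t ^ 2 * K ^ 2 / 2)) * exp (t ^ 2 * K ^ 2 / 2) := by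
          rw [integral_mul_const]
          gcongr
      _ = exp ((n + 1 : ℕ) * (t ^ 2 * K ^ 2 / 2)) := by
          rw [← exp_add]
          push_cast
          ring_nf

lemma measure_sum_ge_le_of_abs_le (hY : IsMartingaleDifference Y ℱ μ)
    (hYK : ∀ k, ∀ᵐ ω ∂μ, |Y k ω| ≤ K) {η : ℝ} (hη : 0 ≤ η) (n : ℕ) :
    μ {ω | n * η ≤ ∑ k ∈ range n, Y k ω} ≤
      ENNReal.ofReal (exp (-(n * η ^ 2 / (2 * K ^ 2)))) := by
  obtain ⟨ω, hω⟩ := (hYK 0).exists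
  obtain rfl | hK := ((abs_nonneg _).trans hω).eq_or_lt
  · -- for `K = 0` the bound is `exp (-(x / 0)) = 1`
    simpa using prob_le_one
  set t := η / K ^ 2
  have hY_meas k : AEStronglyMeasurable (Y k) μ := (hY.integrable k).aestronglyMeasurable
  rw [← ofReal_measureReal]
  gcongr
  calc μ.real {ω | n * η ≤ ∑ k ∈ range n, Y k ω}
      ≤ exp (-t * (n * η)) * mgf (fun ω => ∑ k ∈ range n, Y k ω) μ t :=
        measure_ge_le_exp_mul_mgf _ (by positivity)
          (integrable_exp_mul_sum_of_abs_le hY_meas hYK t n)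
    _ ≤ exp (-t * (n * η)) * exp (n * (t ^ 2 * K ^ 2 / 2)) := by
        gcongr
        exact integral_exp_mul_sum_le_of_abs_le hY hK hYK t n
    _ = exp (-(n * η ^ 2 / (2 * K ^ 2))) := by
        rw [← exp_add]
        congr 1
        simp only [t]
        field_simp
        ring

lemma measure_abs_sum_ge_le_of_abs_le (hY : IsMartingaleDifference Y ℱ μ)
    (hYK : ∀ k, ∀ᵐ ω ∂μ, |Y k ω| ≤ K) {η : ℝ} (hη : 0 ≤ η) (n : ℕ) :
    μ {ω | n * η ≤ |∑ k ∈ range n, Y k ω|} ≤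
      ENNReal.ofReal (2 * exp (-(n * η ^ 2 / (2 * K ^ 2)))) := by
  have hYK_neg k : ∀ᵐ ω ∂μ, |-Y k ω| ≤ K := by simpa only [abs_neg] using hYK k
  calc μ {ω | n * η ≤ |∑ k ∈ range n, Y k ω|}
      ≤ μ ({ω | n * η ≤ ∑ k ∈ range n, Y k ω} ∪ {ω | n * η ≤ ∑ k ∈ range n, -Y k ω}) := by
        refine measure_mono fun ω (hω : n * η ≤ |∑ k ∈ range n, Y k ω|) => ?_
        simpa [sum_neg_distrib] using le_abs.1 hω
    _ ≤ ENNReal.ofReal (exp (-(n * η ^ 2 / (2 * K ^ 2)))) +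
          ENNReal.ofReal (exp (-(n * η ^ 2 / (2 * K ^ 2)))) :=
        (measure_union_le _ _).trans (add_le_add (measure_sum_ge_le_of_abs_le hY hYK hη n)
          (measure_sum_ge_le_of_abs_le hY.neg hYK_neg hη n))
    _ = ENNReal.ofReal (2 * exp (-(n * η ^ 2 / (2 * K ^ 2)))) := by
        rw [← ENNReal.ofReal_add (by positivity) (by positivity), ← two_mul]

end Azuma

lemma OrthonormalBasis.exists_norm_le_sqrt_card_mul_abs_inner {ι E : Type*} [Fintype ι]
    [Nonempty ι] [NormedAddCommGroup E] [InnerProductSpace ℝ E] (b : OrthonormalBasis ι ℝ E)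
    (x : E) : ∃ i, ‖x‖ ≤ √(Fintype.card ι) * |⟪b i, x⟫| := by
  obtain ⟨i, hi⟩ := exists_eq_ciSup_of_finite (f := fun i => ‖⟪b i, x⟫‖)
  have h := b.norm_le_card_mul_iSup_norm_inner x
  rw [← hi, Real.norm_eq_abs] at h
  exact ⟨i, h⟩

theorem measure_norm_sum_ge_le_of_norm_le {Ω E : Type*} [NormedAddCommGroup E]
    [InnerProductSpace ℝ E] [FiniteDimensional ℝ E] (hE : 0 < finrank ℝ E)
    {m0 : MeasurableSpace Ω} {μ : Measure Ω} [IsProbabilityMeasure μ] {ℱ : Filtration ℕ m0}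
    {Y : ℕ → Ω → E} (hY : IsMartingaleDifference Y ℱ μ) {K : ℝ}
    (hYK : ∀ k, ∀ᵐ ω ∂μ, ‖Y k ω‖ ≤ K) {η : ℝ} (hη : 0 ≤ η) (n : ℕ) :
    μ {ω | n * η ≤ ‖∑ k ∈ range n, Y k ω‖} ≤
      ENNReal.ofReal (2 * finrank ℝ E * exp (-(n * η ^ 2 / (2 * finrank ℝ E * K ^ 2)))) := by
  set d := finrank ℝ E
  have : Nonempty (Fin d) := ⟨⟨0, hE⟩⟩
  set b := stdOrthonormalBasis ℝ E
  have hd : 0 < √(d : ℝ) := by positivity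
  have hcoord (i : Fin d) :
      μ {ω | n * (η / √d) ≤ |∑ k ∈ range n, innerSL ℝ (b i) (Y k ω)|} ≤
        ENNReal.ofReal (2 * exp (-(n * (η / √d) ^ 2 / (2 * K ^ 2)))) := by
    refine measure_abs_sum_ge_le_of_abs_le (hY.map (innerSL ℝ (b i))) (fun k => ?_)
      (div_nonneg hη hd.le) n
    filter_upwards [hYK k] with ω h
    calc |innerSL ℝ (b i) (Y k ω)| ≤ ‖b i‖ * ‖Y k ω‖ := abs_real_inner_le_norm _ _
      _ ≤ K := by rwa [b.norm_eq_one, one_mul]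
  calc μ {ω | n * η ≤ ‖∑ k ∈ range n, Y k ω‖}
      ≤ μ (⋃ i, {ω | n * (η / √d) ≤ |∑ k ∈ range n, innerSL ℝ (b i) (Y k ω)|}) := by
        refine measure_mono fun ω (hω : n * η ≤ ‖∑ k ∈ range n, Y k ω‖) => ?_
        obtain ⟨i, hi⟩ := b.exists_norm_le_sqrt_card_mul_abs_inner (∑ k ∈ range n, Y k ω)
        refine Set.mem_iUnion.2 ⟨i, ?_⟩
        simp only [Fintype.card_fin, inner_sum] at hi
        simp only [innerSL_apply_apply, Set.mem_ofPred_eq, mul_div_assoc', div_le_iff₀ hd]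
        linarith
    _ ≤ ∑ i, μ {ω | n * (η / √d) ≤ |∑ k ∈ range n, innerSL ℝ (b i) (Y k ω)|} :=
        measure_iUnion_fintype_le _ _
    _ ≤ ∑ _i : Fin d, ENNReal.ofReal (2 * exp (-(n * (η / √d) ^ 2 / (2 * K ^ 2)))) :=
        sum_le_sum fun i _ => hcoord i
    _ = ENNReal.ofReal (2 * d * exp (-(n * η ^ 2 / (2 * d * K ^ 2)))) := by
        rw [sum_const, card_univ, Fintype.card_fin, nsmul_eq_mul, ← ENNReal.ofReal_natCast,
          ← ENNReal.ofReal_mul (by positivity), div_pow, sq_sqrt (by positivity)]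
        congr 1
        ring_nf

/-- Multidimensional Hoeffding–Azuma inequality (Chen–White): for every dimension `d` there is a
constant `c_d > 0` such that for any adapted sequence `X` of random vectors in `ℝ^d` bounded by
`B` whose conditional expectations are given by the predictable sequence `m`, the average of the
martingale differences `X_m - m_m` deviates from `0` by at least `η` with probability at most
`2 exp(-n η² c_d / (2 B²))`. -/
theorem multidim_hoeffding_azuma (d : ℕ) :
    ∃ c : ℝ, 0 < c ∧
      ∀ (Ω : Type) (_ : MeasurableSpace Ω) (μ : Measure Ω) (_ : IsProbabilityMeasure μ)
        (ℱ : Filtration ℕ (by infer_instance))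
        (X M : ℕ → Ω → EuclideanSpace ℝ (Fin d)) (B : ℝ),
        Adapted ℱ X →
        (∀ n, ∀ᵐ ω ∂μ, ‖X n ω‖ ≤ B) →
        (∀ n, StronglyMeasurable[ℱ n] (M (n + 1))) →
        (∀ n, M (n + 1) =ᵐ[μ] μ[X (n + 1) | ℱ n]) →
        ∀ (η : ℝ), 0 < η → ∀ n : ℕ,
          μ {ω | η ≤ ‖(n : ℝ)⁻¹ • ∑ m ∈ Finset.Icc 1 n, (X m ω - M m ω)‖} ≤
            ENNReal.ofReal (2 * Real.exp (-((n : ℝ) * η ^ 2 * c / ((2 : ℝ) * B ^ 2)))) := by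
  obtain rfl | hd := d.eq_zero_or_pos
  · refine ⟨1, one_pos, fun Ω _ μ _ ℱ X M B _ _ _ _ η hη n => ?_⟩
    simp [EuclideanSpace.norm_eq, hη.not_ge]
  refine ⟨(8 * (d : ℝ) ^ 2)⁻¹, by positivity, fun Ω _ μ _ ℱ X M B hX hXB hM hXM η hη n => ?_⟩
  have hX_int k : Integrable (X k) μ :=
    .of_bound ((hX k).stronglyMeasurable.mono (ℱ.le k)).aestronglyMeasurable B (hXB k)
  have hZ := isMartingaleDifference_sub_condExp (fun k => (hX k).stronglyMeasurable) hX_int hM hXM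
  have hZB k : ∀ᵐ ω ∂μ, ‖X (k + 1) ω - M (k + 1) ω‖ ≤ 2 * B := by
    filter_upwards [hXB (k + 1), hXM k, ae_norm_condExp_le (ℱ.le k) (hX_int (k + 1)) (hXB (k + 1))]
      with ω hXω hMω hCω
    linarith [norm_sub_le (X (k + 1) ω) (M (k + 1) ω), hMω ▸ hCω]
  have htail := measure_norm_sum_ge_le_of_norm_le (by simpa using hd) hZ hZB hη.le n
  rw [finrank_euclideanSpace_fin] at htail
  calc μ {ω | η ≤ ‖(n : ℝ)⁻¹ • ∑ m ∈ Icc 1 n, (X m ω - M m ω)‖}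
      ≤ μ {ω | n * η ≤ ‖∑ k ∈ range n, (X (k + 1) ω - M (k + 1) ω)‖} := by
        refine measure_mono fun ω hω => ?_
        have h := mul_le_norm_of_le_norm_inv_smul hη hω
        rwa [sum_Icc_one_eq_sum_range] at h
    _ ≤ min 1 (ENNReal.ofReal (2 * d * exp (-(n * η ^ 2 / (2 * d * (2 * B) ^ 2))))) :=
        le_min prob_le_one htail
    _ ≤ ENNReal.ofReal (2 * exp (-(n * η ^ 2 * (8 * (d : ℝ) ^ 2)⁻¹ / (2 * B ^ 2)))) := by
        rw [← ENNReal.ofReal_one, ← ENNReal.ofReal_min]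
        refine ENNReal.ofReal_le_ofReal ((min_one_two_mul_exp_neg_le hd _).trans_eq ?_)
        ring_nf
end

section
/- Suppose that for every index l in a finite set L, limsup_{n→∞} (|N_n(l)|/n) · ( max_{x ∈ Δ(I)} W(x, μ̄_n(l)) − ρ̄_n(l) − ε ) ≤ 0 almost surely, where {N_n(l)}_{l∈L} partitions {1,…,n}, μ̄_n(l) and ρ̄_n(l) are the averages of bounded sequences (μ_m) in a compact convex set S and (ρ_m) in R over N_n(l), μ̄_n = Σ_l (|N_n(l)|/n) μ̄_n(l), ρ̄_n = Σ_l (|N_n(l)|/n) ρ̄_n(l), and the function μ ↦ max_{x ∈ Δ(I)} W(x,μ) is convex. Then limsup_{n→∞} ( max_{x ∈ Δ(I)} W(x, μ̄_n) − ρ̄_n ) ≤ ε almost surely. -/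
/-!
By convexity of `V` (Jensen's inequality), the global regret is dominated pointwise by the sum
over the finitely many types of the weighted per-type regrets, plus `ε`:
`V(μ̄_n) - ρ̄_n ≤ ∑_l (|N_n(l)|/n) (V(μ̄_n(l)) - ρ̄_n(l) - ε) + ε`.
Everything is bounded, so the limsup of a finite sum is at most the sum of the limsups, each of
which is nonpositive by hypothesis.
-/

open Filter

section LimsupSum

variable {ι κ α : Type*} [AddCommGroup α] [ConditionallyCompleteLinearOrder α] [DenselyOrdered α]
  [AddLeftMono α] {f : Filter ι} [f.NeBot]

theorem Filter.limsup_finset_sum_le {u : κ → ι → α} (s : Finset κ)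
    (h_above : ∀ k ∈ s, IsBoundedUnder (· ≤ ·) f (u k))
    (h_below : ∀ k ∈ s, IsBoundedUnder (· ≥ ·) f (u k)) :
    limsup (∑ k ∈ s, u k) f ≤ ∑ k ∈ s, limsup (u k) f := by
  induction s using Finset.cons_induction with
  | empty => exact (limsup_const (0 : α)).le
  | cons k s hk ih =>
    simp only [Finset.forall_mem_cons] at h_above h_below
    rw [Finset.sum_cons, Finset.sum_cons]
    calc limsup (u k + ∑ j ∈ s, u j) f ≤ limsup (u k) f + limsup (∑ j ∈ s, u j) f :=
          limsup_add_le h_below.1 h_above.1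
            (isBoundedUnder_ge_sum s h_below.2).isCoboundedUnder_le
            (isBoundedUnder_le_sum s h_above.2)
      _ ≤ limsup (u k) f + ∑ j ∈ s, limsup (u j) f := by
          gcongr
          exact ih h_above.2 h_below.2

end LimsupSum

theorem ConvexOn.map_sum_sub_sum_le_sum_regret {𝕜 E ι : Type*} [Field 𝕜] [LinearOrder 𝕜]
    [IsStrictOrderedRing 𝕜] [AddCommGroup E] [Module 𝕜 E] {s : Set E} {V : E → 𝕜}
    (hV : ConvexOn 𝕜 s V) {t : Finset ι} {w : ι → 𝕜} {x : ι → E} (ρ : ι → 𝕜) (ε : 𝕜)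
    (hw₀ : ∀ i ∈ t, 0 ≤ w i) (hw₁ : ∑ i ∈ t, w i = 1) (hx : ∀ i ∈ t, x i ∈ s) :
    V (∑ i ∈ t, w i • x i) - ∑ i ∈ t, w i * ρ i ≤ ∑ i ∈ t, w i * (V (x i) - ρ i - ε) + ε := by
  have hsum : ∑ i ∈ t, w i * (V (x i) - ρ i - ε) + ε
      = ∑ i ∈ t, w i * V (x i) - ∑ i ∈ t, w i * ρ i := by
    simp only [mul_sub, Finset.sum_sub_distrib, ← Finset.sum_mul, hw₁]
    ring
  rw [hsum]
  gcongr
  simpa only [smul_eq_mul] using hV.map_sum_le hw₀ hw₁ hx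

theorem Finset.sum_natCast_div_eq_one {L : Type*} {s : Finset L} {N : L → ℕ} {n : ℕ}
    (hn : 0 < n) (hN : ∑ l ∈ s, N l = n) : ∑ l ∈ s, (N l : ℝ) / n = 1 := by
  rw [← Finset.sum_div, ← Nat.cast_sum, hN, div_self (by positivity)]

theorem internal_implies_external_pathwise_general {L : Type*} [Fintype L] {m : ℕ}
    (S : Set (EuclideanSpace ℝ (Fin m)))
    (V : EuclideanSpace ℝ (Fin m) → ℝ) (hV : ConvexOn ℝ S V)
    (MV : ℝ) (hVbdd : ∀ μ ∈ S, |V μ| ≤ MV)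
    (N : ℕ → L → ℕ) (hN : ∀ n : ℕ, 0 < n → ∑ l, N n l = n)
    (μbar : ℕ → L → EuclideanSpace ℝ (Fin m)) (hμS : ∀ n l, μbar n l ∈ S)
    (ρbar : ℕ → L → ℝ) (M : ℝ) (hρ : ∀ n l, |ρbar n l| ≤ M)
    (ε : ℝ)
    (hint : ∀ l : L,
      limsup (fun n : ℕ => ((N n l : ℝ) / n) * (V (μbar n l) - ρbar n l - ε)) atTop ≤ 0) :
    limsup (fun n : ℕ =>
        V (∑ l, ((N n l : ℝ) / n) • μbar n l) - ∑ l, ((N n l : ℝ) / n) * ρbar n l) atTop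
      ≤ ε := by
  set w : ℕ → L → ℝ := fun n l => (N n l : ℝ) / n
  set regret : L → ℕ → ℝ := fun l n => w n l * (V (μbar n l) - ρbar n l - ε)
  have hw₀ : ∀ n l, 0 ≤ w n l := fun n l => by positivity
  have hw₁ : ∀ᶠ n in atTop, ∑ l, w n l = 1 := by
    filter_upwards [eventually_gt_atTop 0] with n hn using Finset.sum_natCast_div_eq_one hn (hN n hn)
  have h_le : ∀ᶠ n in atTop, V (∑ l, w n l • μbar n l) - ∑ l, w n l * ρbar n l
      ≤ (∑ l, regret l) n + ε := by
    filter_upwards [hw₁] with n hn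
    simpa only [Finset.sum_apply] using hV.map_sum_sub_sum_le_sum_regret (ρbar n) ε
      (fun l _ => hw₀ n l) hn (fun l _ => hμS n l)
  have h_ge : ∀ᶠ n in atTop, -(MV + M) ≤ V (∑ l, w n l • μbar n l) - ∑ l, w n l * ρbar n l := by
    filter_upwards [hw₁] with n hn
    have hμ := hV.1.sum_mem (fun l _ => hw₀ n l) hn (fun l _ => hμS n l)
    have hρ' := (convex_Icc (-M) M).sum_mem (fun l _ => hw₀ n l) hn
      (fun l _ => abs_le.mp (hρ n l))
    simp only [smul_eq_mul, Set.mem_Icc] at hρ'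
    linarith [(abs_le.mp (hVbdd _ hμ)).1]
  have h_regret : ∀ l, ∀ᶠ n in atTop, |regret l n| ≤ MV + M + |ε| := fun l => by
    filter_upwards [hw₁] with n hn
    have hw_le : w n l ≤ 1 :=
      (Finset.single_le_sum (fun l _ => hw₀ n l) (Finset.mem_univ l)).trans_eq hn
    calc |regret l n| = w n l * |V (μbar n l) - ρbar n l - ε| := by
          rw [abs_mul, abs_of_nonneg (hw₀ n l)]
      _ ≤ |V (μbar n l) - ρbar n l - ε| := mul_le_of_le_one_left (abs_nonneg _) hw_le
      _ ≤ MV + M + |ε| := by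
          have := hVbdd _ (hμS n l)
          have := hρ n l
          grind [abs_sub_le_iff, abs_le]
  have h_above : ∀ l ∈ Finset.univ, IsBoundedUnder (· ≤ ·) atTop (regret l) := fun l _ =>
    (isBoundedUnder_le_abs.mp (isBoundedUnder_of_eventually_le (h_regret l))).1
  have h_below : ∀ l ∈ Finset.univ, IsBoundedUnder (· ≥ ·) atTop (regret l) := fun l _ =>
    (isBoundedUnder_le_abs.mp (isBoundedUnder_of_eventually_le (h_regret l))).2
  calc _ ≤ limsup (fun n => (∑ l, regret l) n + ε) atTop :=
        limsup_le_limsup h_le (isBoundedUnder_of_eventually_ge h_ge).isCoboundedUnder_le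
          (isBoundedUnder_le_add (isBoundedUnder_le_sum _ h_above) isBoundedUnder_const)
    _ = limsup (∑ l, regret l) atTop + ε :=
        limsup_add_const _ _ _ (isBoundedUnder_le_sum _ h_above)
          (isBoundedUnder_ge_sum _ h_below).isCoboundedUnder_le
    _ ≤ ∑ l, limsup (regret l) atTop + ε := by
        gcongr
        exact limsup_finset_sum_le _ h_above h_below
    _ ≤ ε := by linarith [Finset.sum_nonpos fun l (_ : l ∈ Finset.univ) => hint l]

/-- Pathwise core of "internal consistency implies external consistency": if for every type
`l ∈ L` the weighted per-type regret `(|N_n(l)|/n) (max_x W(x, μ̄_n(l)) - ρ̄_n(l) - ε)` has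
nonpositive limsup, the per-type average flags lie in a compact convex set `S` on which the
convex value function `V = max_x W` is bounded, and the per-type average payoffs are bounded,
then the global regret `V(μ̄_n) - ρ̄_n` has limsup at most `ε`, where `μ̄_n` and `ρ̄_n` are the
corresponding convex combinations. -/
theorem internal_implies_external_pathwise {L : Type*} [Fintype L] {m : ℕ}
    (S : Set (EuclideanSpace ℝ (Fin m))) (hScpt : IsCompact S) (hSconv : Convex ℝ S)
    (V : EuclideanSpace ℝ (Fin m) → ℝ) (hV : ConvexOn ℝ S V)
    (MV : ℝ) (hVbdd : ∀ μ ∈ S, |V μ| ≤ MV)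
    (N : ℕ → L → ℕ) (hN : ∀ n : ℕ, 0 < n → ∑ l, N n l = n)
    (μbar : ℕ → L → EuclideanSpace ℝ (Fin m)) (hμS : ∀ n l, μbar n l ∈ S)
    (ρbar : ℕ → L → ℝ) (M : ℝ) (hρ : ∀ n l, |ρbar n l| ≤ M)
    (ε : ℝ)
    (hint : ∀ l : L,
      limsup (fun n : ℕ => ((N n l : ℝ) / n) * (V (μbar n l) - ρbar n l - ε)) atTop ≤ 0) :
    limsup (fun n : ℕ =>
        V (∑ l, ((N n l : ℝ) / n) • μbar n l) - ∑ l, ((N n l : ℝ) / n) * ρbar n l) atTop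
      ≤ ε :=
  internal_implies_external_pathwise_general S V hV MV hVbdd N hN μbar hμS ρbar M hρ ε hint
end
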